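/- Let 0 < λ < 1, m ≥ 3, and let a = (a₁,…,a_m) satisfy 0 = a₁ < a₂ < ⋯ < a_m = 1−λ, with conditions: any three intervals among f_i([0,1]) = [a_i, a_i+λ] have empty common intersection; whenever f_i([0,1]) ∩ f_j([0,1]) ≠ ∅ with i < j, the intersection has length λ^{k_ℓ} for some ℓ (where k₁ > k₂ > ⋯ > k_n ≥ 2 are fixed integers); and f_m([0,1]) is disjoint from f_j([0,1]) for all j < m. Let K be the attractor of {f_i(x)=λx+a_i}. Then for each index j with |f_j([0,1]) ∩ f_{j+1}([0,1])| = λ^{k_ℓ}, the set f_j(K) ∖ (f_j ∘ f_m^{k_ℓ−1})(K) equals ⋃_{i=1}^{m+k_ℓ−3} f_j(K_i), where K₁,…,K_{m+k₁−2} is the partition of K given by: K_{h(j)} = f_j(K) ∖ f_j∘f_m^{k_ℓ−1}(K) for j in the overlap class ℓ, K_{h(j)} = f_j(K) for non-overlapping j < m, K_{m+t} = f_m^{t+1}(K) ∖ f_m^{t+2}(K) for 0 ≤ t < k₁−2, and K_{m+k₁−2} = f_m^{k₁−1}(K). -/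

import Mathlib

/-!
Write `c = k ℓ` and `f i x = l * x + a i`. Since `f j` is injective it suffices to show
`K \ f_m^[c-1] K = ⋃_{i ≤ m+c-3} K'_i`. A point of `K` lies in some `f_j K`; it either lies
in the piece `K'_{h j}` or, when `f_j K` and `f_{j+1} K` overlap by `l ^ c'`, in
`f_j f_m^[c'-1] K = f_{j+1} f_1^[c'-1] K ⊆ f_{j+1} K`. Walking right, it ends in a piece or
in `f_m K`, and there the first `s` with `x ∉ f_m^[s] K` puts it into the tail piece `K'_{m+s-2}`.
Conversely, condition (III) keeps every `f_j K` with `j < m` away from `f_m K`.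
-/

open Set Function

theorem mapsTo_of_eq_biUnion_image {ι α : Type*} {f : ι → α → α} {K : Set α} {I : Set ι}
    (hK : K = ⋃ i ∈ I, f i '' K) {i : ι} (hi : i ∈ I) : MapsTo (f i) K K :=
  mapsTo_iff_image_subset.2 <|
    (subset_biUnion_of_mem (u := fun i => f i '' K) hi).trans hK.symm.subset

section Combinatorics

variable {α : Type*}

theorem exists_mem_diff_succ_of_mem_of_notMem (S : ℕ → Set α) {x : α} {a b : ℕ}
    (hab : a ≤ b) (ha : x ∈ S a) (hb : x ∉ S b) :
    ∃ t ∈ Ico a b, x ∈ S t \ S (t + 1) := by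
  induction b, hab using Nat.le_induction with
  | base => exact absurd ha hb
  | succ b hab ih =>
    by_cases hxb : x ∈ S b
    · exact ⟨b, ⟨hab, b.lt_succ_self⟩, hxb, hb⟩
    · obtain ⟨t, ht, hxt⟩ := ih hxb
      exact ⟨t, ⟨ht.1, ht.2.trans b.lt_succ_self⟩, hxt⟩

theorem subset_union_of_subset_union_succ (A : ℕ → Set α) (P : Set α) {a b : ℕ}
    (hstep : ∀ j ∈ Ico a b, A j ⊆ P ∪ A (j + 1)) :
    ∀ j ∈ Icc a b, A j ⊆ P ∪ A b := by
  rintro j ⟨haj, hjb⟩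
  refine Nat.decreasingInduction' (fun i hib hji ih => ?_) hjb subset_union_right
  exact (hstep i ⟨haj.trans hji, hib⟩).trans (union_subset subset_union_left ih)

theorem iterate_image_subset_iterate_image {f : α → α} {K : Set α} (hf : MapsTo f K K)
    {s t : ℕ} (hst : s ≤ t) : f^[t] '' K ⊆ f^[s] '' K := by
  obtain ⟨d, rfl⟩ := Nat.exists_eq_add_of_le hst
  rw [iterate_add, image_comp]
  exact image_mono (hf.iterate d).image_subset

theorem diff_iterate_image_eq_biUnion {f : ℕ → α → α} {K : Set α} {m c : ℕ}
    (K' : ℕ → Set α) (h : ℕ → ℕ) (hm : 1 ≤ m) (hc : 2 ≤ c)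
    (hK : K = ⋃ i ∈ Icc 1 m, f i '' K)
    (hh : BijOn h (Icc 1 (m - 1)) (Icc 1 (m - 1)))
    (hpiece : ∀ j ∈ Icc 1 (m - 1), ∃ T ⊆ f (j + 1) '' K, K' (h j) = f j '' K \ T)
    (hdisj : ∀ j ∈ Icc 1 (m - 1), Disjoint (f j '' K) (f m '' K))
    (htail : ∀ t, t + 3 ≤ c → K' (m + t) = (f m)^[t + 1] '' K \ (f m)^[t + 2] '' K) :
    K \ (f m)^[c - 1] '' K = ⋃ i ∈ Icc 1 (m + c - 3), K' i := by
  have hmaps : ∀ i ∈ Icc 1 m, MapsTo (f i) K K := fun _ => mapsTo_of_eq_biUnion_image hK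
  have hfm := hmaps m ⟨hm, le_rfl⟩
  have hpiece_sub (j) (hj : j ∈ Icc 1 (m - 1)) : K' (h j) ⊆ ⋃ i ∈ Icc 1 (m + c - 3), K' i :=
    have := hh.mapsTo hj
    subset_biUnion_of_mem (u := K') ⟨this.1, by grind⟩
  apply Subset.antisymm
  · rintro x ⟨hxK, hxc⟩
    have hstep : ∀ j ∈ Ico 1 m,
        f j '' K ⊆ (⋃ i ∈ Icc 1 (m + c - 3), K' i) ∪ f (j + 1) '' K := by
      rintro j ⟨hj1, hjm⟩
      have hj : j ∈ Icc 1 (m - 1) := ⟨hj1, by omega⟩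
      obtain ⟨T, hT, hKT⟩ := hpiece j hj
      calc f j '' K ⊆ (f j '' K \ T) ∪ T := by rw [sdiff_union_self]; exact subset_union_left
        _ ⊆ _ := union_subset_union (hKT ▸ hpiece_sub j hj) hT
    obtain ⟨j, hj, hxj⟩ := mem_iUnion₂.1 (hK.subset hxK)
    rcases subset_union_of_subset_union_succ (fun i => f i '' K) _ hstep j hj hxj with hP | hxm
    · exact hP
    obtain ⟨t, ht, hxt, hxt'⟩ := exists_mem_diff_succ_of_mem_of_notMem
      (fun s => (f m)^[s] '' K) (a := 1) (b := c - 1) (by omega) (by simpa using hxm) hxc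
    refine mem_biUnion (x := m + (t - 1)) ⟨by omega, by grind⟩ ?_
    rw [htail (t - 1) (by grind), show t - 1 + 1 = t by grind, show t - 1 + 2 = t + 1 by grind]
    exact ⟨hxt, hxt'⟩
  · refine iUnion₂_subset fun i hi => ?_
    rcases le_or_gt i (m - 1) with him | him
    · obtain ⟨j, hj, rfl⟩ := hh.surjOn ⟨hi.1, him⟩
      obtain ⟨T, -, hKT⟩ := hpiece j hj
      rw [hKT]
      rintro x ⟨hxj, -⟩
      refine ⟨(hmaps j ⟨hj.1, hj.2.trans (Nat.sub_le m 1)⟩).image_subset hxj, fun hxc => ?_⟩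
      refine (hdisj j hj).notMem_of_mem_left hxj ?_
      simpa using iterate_image_subset_iterate_image hfm (s := 1) (t := c - 1) (by omega) hxc
    · obtain ⟨t, rfl⟩ : ∃ t, i = m + t := ⟨i - m, by omega⟩
      rw [htail t (by grind)]
      exact sdiff_subset_sdiff ((hfm.iterate _).image_subset)
        (iterate_image_subset_iterate_image hfm (by grind))

end Combinatorics

section Affine

variable {l : ℝ} {K : Set ℝ}

theorem subset_Icc_zero_one_of_subset_biUnion_image {ι : Type*} {I : Set ι} {a : ι → ℝ}
    (hl₀ : 0 ≤ l) (hl₁ : l < 1) (ha : MapsTo a I (Icc 0 (1 - l)))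
    (hKa : BddAbove K) (hKb : BddBelow K) (hK : K ⊆ ⋃ i ∈ I, (fun x => l * x + a i) '' K) :
    K ⊆ Icc 0 1 := by
  rcases K.eq_empty_or_nonempty with rfl | hne
  · exact empty_subset _
  have hsup : sSup K ≤ l * sSup K + (1 - l) := csSup_le hne fun x hx => by
    obtain ⟨i, hi, y, hy, rfl⟩ := mem_iUnion₂.1 (hK hx)
    nlinarith [le_csSup hKa hy, (ha hi).2]
  have hinf : l * sInf K ≤ sInf K := le_csInf hne fun x hx => by
    obtain ⟨i, hi, y, hy, rfl⟩ := mem_iUnion₂.1 (hK hx)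
    nlinarith [csInf_le hKb hy, (ha hi).1]
  exact fun x hx => ⟨by nlinarith [csInf_le hKb hx], by nlinarith [le_csSup hKa hx]⟩

theorem image_affine_subset_Icc (hl : 0 ≤ l) (hK : K ⊆ Icc 0 1) (c : ℝ) :
    (fun x => l * x + c) '' K ⊆ Icc c (c + l) := by
  rintro _ ⟨x, hx, rfl⟩
  obtain ⟨hx₀, hx₁⟩ := hK hx
  constructor <;> nlinarith

theorem disjoint_image_affine (hl : 0 ≤ l) (hK : K ⊆ Icc 0 1) {p q : ℝ}
    (hpq : Icc p (p + l) ∩ Icc q (q + l) = ∅) :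
    Disjoint ((fun x => l * x + p) '' K) ((fun x => l * x + q) '' K) :=
  (disjoint_iff_inter_eq_empty.2 hpq).mono
    (image_affine_subset_Icc hl hK p) (image_affine_subset_Icc hl hK q)

theorem iterate_affine_fixing_one_apply (s : ℕ) (x : ℝ) :
    (fun x => l * x + (1 - l))^[s] x = l ^ s * x + (1 - l ^ s) := by
  induction s with
  | zero => simp
  | succ s ih => rw [iterate_succ_apply', ih]; ring

/-- This is the identity `(l * · + p) ∘ (l * · + (1 - l))^[c] = (l * · + q) ∘ (l * ·)^[c]`. -/
theorem image_comp_iterate_subset_image {p q r : ℝ} {c : ℕ} (hr : r = 1 - l)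
    (hK : MapsTo (l * ·) K K) (hpq : p + l - q = l ^ (c + 1)) :
    ((fun x => l * x + p) ∘ (fun x => l * x + r)^[c]) '' K ⊆ (fun x => l * x + q) '' K := by
  subst hr
  rintro _ ⟨x, hx, rfl⟩
  refine ⟨l ^ c * x, by simpa [mul_left_iterate] using hK.iterate c hx, ?_⟩
  simp only [comp_apply, iterate_affine_fixing_one_apply]
  linear_combination -hpq

end Affine

theorem partition_piece_decomposition_general
    (l : ℝ) (hl : 0 < l ∧ l < 1) (m n : ℕ)
    (k : ℕ → ℕ) (hkanti : StrictAntiOn k (Set.Icc 1 n)) (hk2 : 2 ≤ k n)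
    (a : ℕ → ℝ)
    -- (I)
    (ha1 : a 1 = 0) (ham : a m = 1 - l) (hmono : StrictMonoOn a (Set.Icc 1 m))
    -- (II): nonempty pairwise intersections have length `l ^ k ℓ` for some `1 ≤ ℓ ≤ n`
    (hII : ∀ i j, i ∈ Set.Icc 1 m → j ∈ Set.Icc 1 m → i < j →
      (Set.Icc (a i) (a i + l) ∩ Set.Icc (a j) (a j + l)).Nonempty →
      ∃ ℓ ∈ Set.Icc 1 n, a i + l - a j = l ^ k ℓ)
    -- (III): the interval of `f m` is disjoint from all the others
    (hIII : ∀ j, 1 ≤ j → j < m →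
      Set.Icc (a m) (a m + l) ∩ Set.Icc (a j) (a j + l) = ∅)
    -- the attractor
    (K : Set ℝ) (hKc : IsCompact K)
    (hK : K = ⋃ i ∈ Set.Icc 1 m, (fun x => l * x + a i) '' K)
    -- the relabeling `h` of `{1, …, m-1}` and the partition pieces `K'`
    (h : ℕ → ℕ) (hbij : Set.BijOn h (Set.Icc 1 (m - 1)) (Set.Icc 1 (m - 1)))
    (K' : ℕ → Set ℝ)
    (hK'over : ∀ j ∈ Set.Icc 1 (m - 1), ∀ ℓ ∈ Set.Icc 1 n,
      a j + l - a (j + 1) = l ^ k ℓ →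
      K' (h j) = (fun x => l * x + a j) '' K \
        ((fun x => l * x + a j) ∘ (fun x => l * x + a m)^[k ℓ - 1]) '' K)
    (hK'non : ∀ j ∈ Set.Icc 1 (m - 1),
      Set.Icc (a j) (a j + l) ∩ Set.Icc (a (j + 1)) (a (j + 1) + l) = ∅ →
      K' (h j) = (fun x => l * x + a j) '' K)
    (hK'mid : ∀ t, t < k 1 - 2 →
      K' (m + t) = (fun x => l * x + a m)^[t + 1] '' K \
        (fun x => l * x + a m)^[t + 2] '' K) :
    ∀ j ∈ Set.Icc 1 (m - 1), ∀ ℓ ∈ Set.Icc 1 n,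
      a j + l - a (j + 1) = l ^ k ℓ →
      (fun x => l * x + a j) '' K \
          ((fun x => l * x + a j) ∘ (fun x => l * x + a m)^[k ℓ - 1]) '' K =
        ⋃ i ∈ Set.Icc 1 (m + k ℓ - 3), (fun x => l * x + a j) '' K' i := by
  intro j hj ℓ hℓ hov
  have hm : 1 ≤ m := by have := hj.1.trans hj.2; omega
  have hk : MapsTo k (Icc 1 n) (Icc (k n) (k 1)) := hkanti.antitoneOn.mapsTo_Icc
  have ha : MapsTo a (Icc 1 m) (Icc 0 (1 - l)) := ha1 ▸ ham ▸ hmono.monotoneOn.mapsTo_Icc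
  have hK01 : K ⊆ Icc 0 1 := subset_Icc_zero_one_of_subset_biUnion_image hl.1.le hl.2 ha
    hKc.bddAbove hKc.bddBelow hK.subset
  have hscale : MapsTo (l * ·) K K := by
    simpa [ha1] using mapsTo_of_eq_biUnion_image hK (show 1 ∈ Icc 1 m from ⟨le_rfl, hm⟩)
  have hpiece : ∀ i ∈ Icc 1 (m - 1), ∃ T ⊆ (fun x => l * x + a (i + 1)) '' K,
      K' (h i) = (fun x => l * x + a i) '' K \ T := by
    intro i hi
    have hi₂ := hi.2
    by_cases hint : (Icc (a i) (a i + l) ∩ Icc (a (i + 1)) (a (i + 1) + l)).Nonempty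
    · obtain ⟨ℓ', hℓ', hov'⟩ :=
        hII i (i + 1) ⟨hi.1, by omega⟩ ⟨by omega, by omega⟩ (by omega) hint
      refine ⟨_, image_comp_iterate_subset_image ham hscale ?_, hK'over i hi ℓ' hℓ' hov'⟩
      rw [hov', Nat.sub_add_cancel (by have := (hk hℓ').1; omega)]
    · refine ⟨∅, empty_subset _, ?_⟩
      rw [hK'non i hi (not_nonempty_iff_eq_empty.1 hint), sdiff_empty]
  have hdisj : ∀ i ∈ Icc 1 (m - 1),
      Disjoint ((fun x => l * x + a i) '' K) ((fun x => l * x + a m) '' K) :=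
    fun i ⟨hi₁, hi₂⟩ => (disjoint_image_affine hl.1.le hK01 (hIII i hi₁ (by omega))).symm
  have htail : ∀ t, t + 3 ≤ k ℓ → K' (m + t) =
      (fun x => l * x + a m)^[t + 1] '' K \ (fun x => l * x + a m)^[t + 2] '' K :=
    fun t ht => hK'mid t (by have := (hk hℓ).2; omega)
  have hinj : Injective (fun x => l * x + a j) :=
    (add_left_injective (a j)).comp (mul_right_injective₀ hl.1.ne')
  rw [image_comp, ← image_sdiff hinj,
    diff_iterate_image_eq_biUnion K' h hm (hk2.trans (hk hℓ).1) hK hbij hpiece hdisj htail,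
    image_iUnion₂]

theorem partition_piece_decomposition
    (l : ℝ) (hl : 0 < l ∧ l < 1) (m n : ℕ) (hm : 3 ≤ m) (hn : 1 ≤ n)
    (k : ℕ → ℕ) (hkanti : StrictAntiOn k (Set.Icc 1 n)) (hk2 : 2 ≤ k n)
    (a : ℕ → ℝ)
    -- (I)
    (ha1 : a 1 = 0) (ham : a m = 1 - l) (hmono : StrictMonoOn a (Set.Icc 1 m))
    -- (II): no three of the intervals `[a i, a i + l]` intersect
    (hII3 : ∀ i j t, i ∈ Set.Icc 1 m → j ∈ Set.Icc 1 m → t ∈ Set.Icc 1 m →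
      i ≠ j → j ≠ t → i ≠ t →
      Set.Icc (a i) (a i + l) ∩ Set.Icc (a j) (a j + l) ∩ Set.Icc (a t) (a t + l) = ∅)
    -- (II): nonempty pairwise intersections have length `l ^ k ℓ` for some `1 ≤ ℓ ≤ n`
    (hII : ∀ i j, i ∈ Set.Icc 1 m → j ∈ Set.Icc 1 m → i < j →
      (Set.Icc (a i) (a i + l) ∩ Set.Icc (a j) (a j + l)).Nonempty →
      ∃ ℓ ∈ Set.Icc 1 n, a i + l - a j = l ^ k ℓ)
    -- (III): the interval of `f m` is disjoint from all the others
    (hIII : ∀ j, 1 ≤ j → j < m →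
      Set.Icc (a m) (a m + l) ∩ Set.Icc (a j) (a j + l) = ∅)
    -- the attractor
    (K : Set ℝ) (hKne : K.Nonempty) (hKc : IsCompact K)
    (hK : K = ⋃ i ∈ Set.Icc 1 m, (fun x => l * x + a i) '' K)
    -- the relabeling `h` of `{1, …, m-1}` and the partition pieces `K'`
    (h : ℕ → ℕ) (hbij : Set.BijOn h (Set.Icc 1 (m - 1)) (Set.Icc 1 (m - 1)))
    (K' : ℕ → Set ℝ)
    (hK'over : ∀ j ∈ Set.Icc 1 (m - 1), ∀ ℓ ∈ Set.Icc 1 n,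
      a j + l - a (j + 1) = l ^ k ℓ →
      K' (h j) = (fun x => l * x + a j) '' K \
        ((fun x => l * x + a j) ∘ (fun x => l * x + a m)^[k ℓ - 1]) '' K)
    (hK'non : ∀ j ∈ Set.Icc 1 (m - 1),
      Set.Icc (a j) (a j + l) ∩ Set.Icc (a (j + 1)) (a (j + 1) + l) = ∅ →
      K' (h j) = (fun x => l * x + a j) '' K)
    (hK'mid : ∀ t, t < k 1 - 2 →
      K' (m + t) = (fun x => l * x + a m)^[t + 1] '' K \
        (fun x => l * x + a m)^[t + 2] '' K)
    (hK'last : K' (m + k 1 - 2) = (fun x => l * x + a m)^[k 1 - 1] '' K) :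
    ∀ j ∈ Set.Icc 1 (m - 1), ∀ ℓ ∈ Set.Icc 1 n,
      a j + l - a (j + 1) = l ^ k ℓ →
      (fun x => l * x + a j) '' K \
          ((fun x => l * x + a j) ∘ (fun x => l * x + a m)^[k ℓ - 1]) '' K =
        ⋃ i ∈ Set.Icc 1 (m + k ℓ - 3), (fun x => l * x + a j) '' K' i :=
  partition_piece_decomposition_general l hl m n k hkanti hk2 a ha1 ham hmono hII hIII K hKc hK h
    hbij K' hK'over hK'non hK'mid
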